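/- arXiv:1502.04592 — 2 statements merged into one kernel-verified Lean document; each statement's English description precedes it below -/
import Mathlib

section
/- Let D ≥ 1 and let Φ be a D×D matrix of functions ℝ → ℝ, each entry Φ^{ij} being nonnegative, integrable and causal. Let K be the D×D real matrix of L¹-norms, K^{ij} = ∫_ℝ Φ^{ij}(t) dt, and assume that every complex eigenvalue of K has modulus strictly less than 1. Define matrix convolution powers by (Φ ∗ Φ)^{ij} = Σ_k Φ^{ik} ∗ Φ^{kj} and Φ^{∗(n+1)} = Φ^{∗n} ∗ Φ. Then for each pair (i, j) the series Σ_{n≥1} (Φ^{∗n})^{ij} converges in L¹(ℝ) to a nonnegative, integrable, causal function Ψ^{ij}, and the matrix function Ψ satisfies Ψ(t) = Φ(t) + (Ψ ∗ Φ)(t) entrywise for almost every t. -/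
open MeasureTheory Filter

/-- The convolution of two real functions: `(f ∗ g)(t) = ∫ f(t - s) g(s) ds`. -/
noncomputable def conv (f g : ℝ → ℝ) : ℝ → ℝ := fun t => ∫ s, f (t - s) * g s

/-- A function is causal if it vanishes (a.e.) on negative times. -/
def Causal (h : ℝ → ℝ) : Prop := ∀ᵐ t ∂(volume : Measure ℝ), t < 0 → h t = 0

/-- Matrix convolution: `(A ∗ B)^{ij} = Σ_k A^{ik} ∗ B^{kj}`. -/
noncomputable def matConv {D : ℕ} (A B : Fin D → Fin D → ℝ → ℝ) :
    Fin D → Fin D → ℝ → ℝ :=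
  fun i j t => ∑ k, conv (A i k) (B k j) t

/-- Matrix convolution powers: `matConvPow Φ 1 = Φ`,
`matConvPow Φ (n+1) = (matConvPow Φ n) ∗ Φ`. (The value at `0` is set to `0`.) -/
noncomputable def matConvPow {D : ℕ} (Φ : Fin D → Fin D → ℝ → ℝ) :
    ℕ → Fin D → Fin D → ℝ → ℝ
  | 0 => fun _ _ => 0
  | 1 => Φ
  | n + 2 => matConv (matConvPow Φ (n + 1)) Φ

/-! Sum the series `Σₙ Φ^{∗(n+1)}` of nonnegative kernels pointwise in `ℝ≥0∞`, where no
convergence question arises, and let `Ψ` be its `toReal`. Since `∫ Φ^{∗n} = Kⁿ` entrywise, and the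
spectral condition makes `Σ Kⁿ` summable by Gelfand's formula, the sum is integrable and finite
a.e., and `‖Ψ - Σ_{n≤N} Φ^{∗n}‖₁ = Σ_{n>N} Kⁿ → 0`. The renewal equation is the identity
`Σ_{n≥1} Φ^{∗(n+1)} = (Σ_{n≥1} Φ^{∗n}) ∗ Φ`, which in `ℝ≥0∞` is an interchange of sums and
integrals; it passes back to `ℝ` wherever the convolutions are finite, that is almost everywhere. -/

open scoped ENNReal

section SpectralRadius

variable {A : Type*} [NormedRing A] [NormedAlgebra ℂ A] [CompleteSpace A]

theorem summable_pow_of_spectralRadius_lt_one {a : A} (ha : spectralRadius ℂ a < 1) :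
    Summable (a ^ ·) := by
  obtain ⟨r, har, hr1⟩ := ENNReal.lt_iff_exists_nnreal_btwn.mp ha
  have hroot : ∀ᶠ n : ℕ in atTop, ‖a ^ n‖ ^ (1 / n : ℝ) < r := by
    filter_upwards [(spectrum.pow_norm_pow_one_div_tendsto_nhds_spectralRadius a)
      |>.eventually_lt_const har] with n hn
    exact (ENNReal.ofReal_lt_iff_lt_toReal (by positivity) ENNReal.coe_ne_top).mp hn
  refine .of_norm_bounded_eventually_nat
    (summable_geometric_of_lt_one r.coe_nonneg (mod_cast hr1)) ?_
  filter_upwards [hroot, eventually_gt_atTop 0] with n hn hn0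
  rw [one_div, Real.rpow_inv_lt_iff_of_pos (norm_nonneg _) r.coe_nonneg (by positivity),
    Real.rpow_natCast] at hn
  exact hn.le

theorem summable_pow_of_forall_norm_spectrum_lt_one {a : A}
    (ha : ∀ z ∈ spectrum ℂ a, ‖z‖ < 1) : Summable (a ^ ·) := by
  refine summable_pow_of_spectralRadius_lt_one ?_
  rcases subsingleton_or_nontrivial A with hA | hA
  · simp
  · exact_mod_cast spectrum.spectralRadius_lt_of_forall_lt a (r := 1) fun z hz => mod_cast ha z hz

end SpectralRadius

section Matrix

attribute [local instance] Matrix.linftyOpNormedRing Matrix.linftyOpNormedAlgebra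

theorem Matrix.summable_pow_apply_of_forall_norm_spectrum_lt_one {n : Type*} [Fintype n]
    [DecidableEq n] {K : Matrix n n ℝ}
    (hK : ∀ z ∈ spectrum ℂ (K.map Complex.ofReal), ‖z‖ < 1) (i j : n) :
    Summable fun m : ℕ => (K ^ m) i j := by
  have h := summable_pow_of_forall_norm_spectrum_lt_one hK
  have hmap : ∀ m : ℕ, (K.map Complex.ofReal) ^ m = (K ^ m).map Complex.ofReal :=
    fun m => (map_pow Complex.ofRealHom.mapMatrix K m).symm
  simp_rw [hmap] at h
  exact Complex.summable_ofReal.mp (Pi.summable.1 (Pi.summable.1 h i) j)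

end Matrix

namespace MeasureTheory

variable {G : Type*} [MeasurableSpace G] {μ : Measure G}

section AddGroup

variable [AddGroup G] [MeasurableAdd₂ G] [MeasurableNeg G] [μ.IsAddLeftInvariant] [SFinite μ]

theorem lintegral_lconvolution {f g : G → ℝ≥0∞} (hf : AEMeasurable f μ)
    (hg : AEMeasurable g μ) :
    ∫⁻ x, (f ⋆ₗ[μ] g) x ∂μ = (∫⁻ x, f x ∂μ) * ∫⁻ x, g x ∂μ := by
  simp only [lconvolution_def]
  rw [lintegral_lintegral_swap (by fun_prop), ← lintegral_mul_const'' _ hf]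
  refine lintegral_congr fun y => ?_
  rw [lintegral_add_left_eq_self (fun x => f y * g x) (-y), lintegral_const_mul'' _ hg]

end AddGroup

section AddCommGroup

variable [AddCommGroup G] [MeasurableAdd₂ G] [MeasurableNeg G] [μ.IsAddLeftInvariant] [SFinite μ]

theorem lconvolution_congr_ae {f₁ f₂ g₁ g₂ : G → ℝ≥0∞} (hf : f₁ =ᵐ[μ] f₂)
    (hg : g₁ =ᵐ[μ] g₂) : f₁ ⋆ₗ[μ] g₁ = f₂ ⋆ₗ[μ] g₂ := by
  ext x
  have hg' : ∀ᵐ y ∂μ, g₁ (-y + x) = g₂ (-y + x) := by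
    simp_rw [neg_add_eq_sub]
    exact (quasiMeasurePreserving_sub_left μ x).ae_eq hg
  refine lintegral_congr_ae ?_
  filter_upwards [hf, hg'] with y hfy hgy
  rw [hfy, hgy]

theorem lconvolution_tsum_right {f : G → ℝ≥0∞} {g : ℕ → G → ℝ≥0∞} (hf : AEMeasurable f μ)
    (hg : ∀ n, AEMeasurable (g n) μ) :
    f ⋆ₗ[μ] (fun x => ∑' n, g n x) = fun x => ∑' n, (f ⋆ₗ[μ] g n) x := by
  ext x
  simp only [lconvolution_def, ← ENNReal.tsum_mul_left]
  refine lintegral_tsum fun n => hf.mul ((hg n).comp_quasiMeasurePreserving ?_)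
  simpa only [neg_add_eq_sub] using quasiMeasurePreserving_sub_left μ x

end AddCommGroup

end MeasureTheory

section Conv

variable {f g : ℝ → ℝ}

theorem conv_eq_convolution :
    conv f g = convolution g f (ContinuousLinearMap.mul ℝ ℝ) volume := by
  ext t
  simp [conv, convolution, mul_comm]

theorem conv_nonneg (hf : ∀ t, 0 ≤ f t) (hg : ∀ t, 0 ≤ g t) (t : ℝ) : 0 ≤ conv f g t :=
  integral_nonneg fun _ => mul_nonneg (hf _) (hg _)

theorem MeasureTheory.Integrable.conv (hf : Integrable f) (hg : Integrable g) :
    Integrable (conv f g) := by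
  rw [conv_eq_convolution]
  exact hg.integrable_convolution _ hf

theorem integral_conv (hf : Integrable f) (hg : Integrable g) :
    ∫ t, conv f g t = (∫ t, f t) * ∫ t, g t := by
  rw [conv_eq_convolution, integral_convolution _ hg hf]
  simp [mul_comm]

theorem Causal.conv (hf : Causal f) (hg : Causal g) : Causal (conv f g) := by
  refine .of_forall fun t ht => integral_eq_zero_of_ae ?_
  have hf' : ∀ᵐ s, t - s < 0 → f (t - s) = 0 :=
    (quasiMeasurePreserving_sub_left volume t).ae hf
  filter_upwards [hf', hg] with s hfs hgs
  rcases lt_or_ge s 0 with hs | hs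
  · simp [hgs hs]
  · simp [hfs (by linarith)]

-- When the integral diverges, both sides are junk `0`.
theorem conv_eq_toReal_lconvolution (hf : ∀ t, 0 ≤ f t) (hg : ∀ t, 0 ≤ g t)
    (hfm : AEMeasurable f) (hgm : AEMeasurable g) (t : ℝ) :
    conv f g t = (((ENNReal.ofReal ∘ g) ⋆ₗ (ENNReal.ofReal ∘ f)) t).toReal := by
  have hm : AEMeasurable (fun s => f (t - s) * g s) :=
    (hfm.comp_quasiMeasurePreserving (quasiMeasurePreserving_sub_left volume t)).mul hgm
  rw [conv, integral_eq_lintegral_of_nonneg_ae (.of_forall fun s => mul_nonneg (hf _) (hg _))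
    hm.aestronglyMeasurable, lconvolution_def]
  congr 1
  refine lintegral_congr fun s => ?_
  rw [ENNReal.ofReal_mul (hf _), mul_comm, neg_add_eq_sub]
  rfl

theorem ae_ofReal_conv_eq_lconvolution (hf : ∀ t, 0 ≤ f t) (hg : ∀ t, 0 ≤ g t)
    (hfi : Integrable f) (hgi : Integrable g) :
    ∀ᵐ t, ENNReal.ofReal (conv f g t) = ((ENNReal.ofReal ∘ g) ⋆ₗ (ENNReal.ofReal ∘ f)) t := by
  have hfm := ENNReal.measurable_ofReal.comp_aemeasurable hfi.aemeasurable
  have hgm := ENNReal.measurable_ofReal.comp_aemeasurable hgi.aemeasurable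
  have hfin : ∀ᵐ t, ((ENNReal.ofReal ∘ g) ⋆ₗ (ENNReal.ofReal ∘ f)) t < ⊤ := by
    refine ae_lt_top' (aemeasurable_lconvolution hgm hfm) ?_
    rw [lintegral_lconvolution hgm hfm]
    exact ENNReal.mul_ne_top hgi.lintegral_lt_top.ne hfi.lintegral_lt_top.ne
  filter_upwards [hfin] with t ht
  rw [conv_eq_toReal_lconvolution hf hg hfi.aemeasurable hgi.aemeasurable,
    ENNReal.ofReal_toReal ht.ne]

end Conv

noncomputable def tsumOfReal {α : Type*} (f : ℕ → α → ℝ) (x : α) : ℝ≥0∞ :=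
  ∑' n, ENNReal.ofReal (f n x)

section TsumOfReal

variable {α : Type*} {f : ℕ → α → ℝ}

theorem sum_range_le_toReal_tsumOfReal (hf : ∀ n x, 0 ≤ f n x) {x : α}
    (hx : tsumOfReal f x < ∞) (N : ℕ) :
    ∑ n ∈ Finset.range N, f n x ≤ (tsumOfReal f x).toReal := by
  calc ∑ n ∈ Finset.range N, f n x
      = (∑ n ∈ Finset.range N, ENNReal.ofReal (f n x)).toReal := by
        rw [ENNReal.toReal_sum fun n _ => ENNReal.ofReal_ne_top]
        exact Finset.sum_congr rfl fun n _ => (ENNReal.toReal_ofReal (hf n x)).symm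
    _ ≤ (tsumOfReal f x).toReal := ENNReal.toReal_mono hx.ne (ENNReal.sum_le_tsum _)

variable [MeasurableSpace α] {μ : Measure α}

theorem aemeasurable_tsumOfReal (hi : ∀ n, Integrable (f n) μ) :
    AEMeasurable (tsumOfReal f) μ :=
  .tsum fun n => (hi n).aemeasurable.ennreal_ofReal

theorem lintegral_tsumOfReal (hf : ∀ n x, 0 ≤ f n x) (hi : ∀ n, Integrable (f n) μ)
    (hs : Summable fun n => ∫ x, f n x ∂μ) :
    ∫⁻ x, tsumOfReal f x ∂μ = ENNReal.ofReal (∑' n, ∫ x, f n x ∂μ) := by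
  simp only [tsumOfReal]
  rw [lintegral_tsum fun n => (hi n).aemeasurable.ennreal_ofReal,
    ENNReal.ofReal_tsum_of_nonneg (fun n => integral_nonneg (hf n)) hs]
  congr with n
  exact (ofReal_integral_eq_lintegral_ofReal (hi n) (.of_forall (hf n))).symm

theorem ae_tsumOfReal_lt_top (hf : ∀ n x, 0 ≤ f n x) (hi : ∀ n, Integrable (f n) μ)
    (hs : Summable fun n => ∫ x, f n x ∂μ) : ∀ᵐ x ∂μ, tsumOfReal f x < ∞ :=
  ae_lt_top' (aemeasurable_tsumOfReal hi) (by simp [lintegral_tsumOfReal hf hi hs])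

theorem integrable_toReal_tsumOfReal (hf : ∀ n x, 0 ≤ f n x) (hi : ∀ n, Integrable (f n) μ)
    (hs : Summable fun n => ∫ x, f n x ∂μ) : Integrable (fun x => (tsumOfReal f x).toReal) μ :=
  integrable_toReal_of_lintegral_ne_top (aemeasurable_tsumOfReal hi)
    (by simp [lintegral_tsumOfReal hf hi hs])

theorem integral_toReal_tsumOfReal (hf : ∀ n x, 0 ≤ f n x) (hi : ∀ n, Integrable (f n) μ)
    (hs : Summable fun n => ∫ x, f n x ∂μ) :
    ∫ x, (tsumOfReal f x).toReal ∂μ = ∑' n, ∫ x, f n x ∂μ := by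
  rw [integral_toReal (aemeasurable_tsumOfReal hi) (ae_tsumOfReal_lt_top hf hi hs),
    lintegral_tsumOfReal hf hi hs,
    ENNReal.toReal_ofReal (tsum_nonneg fun n => integral_nonneg (hf n))]

theorem tendsto_integral_abs_sum_range_sub_toReal_tsumOfReal (hf : ∀ n x, 0 ≤ f n x)
    (hi : ∀ n, Integrable (f n) μ) (hs : Summable fun n => ∫ x, f n x ∂μ) :
    Tendsto (fun N => ∫ x, |∑ n ∈ Finset.range N, f n x - (tsumOfReal f x).toReal| ∂μ)
      atTop (nhds 0) := by
  have hdist : ∀ N, ∫ x, |∑ n ∈ Finset.range N, f n x - (tsumOfReal f x).toReal| ∂μ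
      = ∑' n, ∫ x, f n x ∂μ - ∑ n ∈ Finset.range N, ∫ x, f n x ∂μ := by
    intro N
    have habs : ∀ᵐ x ∂μ, |∑ n ∈ Finset.range N, f n x - (tsumOfReal f x).toReal|
        = (tsumOfReal f x).toReal - ∑ n ∈ Finset.range N, f n x := by
      filter_upwards [ae_tsumOfReal_lt_top hf hi hs] with x hx
      rw [abs_sub_comm, abs_of_nonneg (sub_nonneg.mpr (sum_range_le_toReal_tsumOfReal hf hx N))]
    rw [integral_congr_ae habs, integral_sub (integrable_toReal_tsumOfReal hf hi hs)
      (integrable_finsetSum _ fun n _ => hi n), integral_toReal_tsumOfReal hf hi hs,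
      integral_finsetSum _ fun n _ => hi n]
  simp_rw [hdist]
  simpa using (tendsto_const_nhds (x := ∑' n, ∫ x, f n x ∂μ)).sub hs.hasSum.tendsto_sum_nat

theorem Causal.toReal_tsumOfReal {f : ℕ → ℝ → ℝ} (hc : ∀ n, Causal (f n)) :
    Causal fun t => (tsumOfReal f t).toReal := by
  filter_upwards [ae_all_iff.mpr hc] with t ht hneg
  simp [tsumOfReal, ht _ hneg]

end TsumOfReal

noncomputable def matConvSeries {D : ℕ} (Φ : Fin D → Fin D → ℝ → ℝ) (i j : Fin D) (t : ℝ) : ℝ :=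
  (tsumOfReal (fun n => matConvPow Φ (n + 1) i j) t).toReal

section MatConvPow

variable {D : ℕ} {Φ : Fin D → Fin D → ℝ → ℝ}

@[simp]
theorem matConvPow_one : matConvPow Φ 1 = Φ :=
  rfl

theorem matConvPow_add_two_apply (n : ℕ) (i j : Fin D) (t : ℝ) :
    matConvPow Φ (n + 2) i j t = ∑ k, conv (matConvPow Φ (n + 1) i k) (Φ k j) t :=
  rfl

theorem matConvPow_succ_nonneg (hpos : ∀ i j t, 0 ≤ Φ i j t) (n : ℕ) :
    ∀ i j t, 0 ≤ matConvPow Φ (n + 1) i j t := by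
  induction n with
  | zero => exact hpos
  | succ n ih =>
    intro i j t
    rw [matConvPow_add_two_apply]
    exact Finset.sum_nonneg fun k _ => conv_nonneg (ih i k) (hpos k j) t

theorem integrable_matConvPow_succ (hint : ∀ i j, Integrable (Φ i j)) (n : ℕ) :
    ∀ i j, Integrable (matConvPow Φ (n + 1) i j) := by
  induction n with
  | zero => exact hint
  | succ n ih =>
    intro i j
    show Integrable fun t => ∑ k, conv (matConvPow Φ (n + 1) i k) (Φ k j) t
    exact integrable_finsetSum _ fun k _ => (ih i k).conv (hint k j)

theorem causal_matConvPow_succ (hc : ∀ i j, Causal (Φ i j)) (n : ℕ) :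
    ∀ i j, Causal (matConvPow Φ (n + 1) i j) := by
  induction n with
  | zero => exact hc
  | succ n ih =>
    intro i j
    filter_upwards [ae_all_iff.mpr fun k => (ih i k).conv (hc k j)] with t ht hneg
    rw [matConvPow_add_two_apply]
    exact Finset.sum_eq_zero fun k _ => ht k hneg

theorem integral_matConvPow_succ (hint : ∀ i j, Integrable (Φ i j)) (n : ℕ) :
    ∀ i j, ∫ t, matConvPow Φ (n + 1) i j t
      = ((Matrix.of fun i j => ∫ t, Φ i j t) ^ (n + 1)) i j := by
  induction n with
  | zero => simp
  | succ n ih =>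
    intro i j
    have hconv : ∀ k, Integrable (conv (matConvPow Φ (n + 1) i k) (Φ k j)) := fun k =>
      (integrable_matConvPow_succ hint n i k).conv (hint k j)
    simp_rw [matConvPow_add_two_apply, integral_finsetSum _ fun k _ => hconv k,
      integral_conv (integrable_matConvPow_succ hint n i _) (hint _ j), ih, pow_succ,
      Matrix.mul_apply, Matrix.of_apply]

theorem ae_tsumOfReal_matConvPow_eq_add_sum_lconvolution (hpos : ∀ i j t, 0 ≤ Φ i j t)
    (hint : ∀ i j, Integrable (Φ i j)) (i j : Fin D) :
    ∀ᵐ t, tsumOfReal (fun n => matConvPow Φ (n + 1) i j) t = ENNReal.ofReal (Φ i j t) +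
      ∑ k, ((ENNReal.ofReal ∘ Φ k j) ⋆ₗ tsumOfReal (fun n => matConvPow Φ (n + 1) i k)) t := by
  have hstep : ∀ᵐ t, ∀ n k, ENNReal.ofReal (conv (matConvPow Φ (n + 1) i k) (Φ k j) t)
      = ((ENNReal.ofReal ∘ Φ k j) ⋆ₗ (ENNReal.ofReal ∘ matConvPow Φ (n + 1) i k)) t :=
    ae_all_iff.mpr fun n => ae_all_iff.mpr fun k => ae_ofReal_conv_eq_lconvolution
      (matConvPow_succ_nonneg hpos n i k) (hpos k j) (integrable_matConvPow_succ hint n i k)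
      (hint k j)
  have hΦ : ∀ k, AEMeasurable (ENNReal.ofReal ∘ Φ k j) := fun k =>
    (hint k j).aemeasurable.ennreal_ofReal
  have hP : ∀ n k, AEMeasurable (ENNReal.ofReal ∘ matConvPow Φ (n + 1) i k) := fun n k =>
    (integrable_matConvPow_succ hint n i k).aemeasurable.ennreal_ofReal
  filter_upwards [hstep] with t ht
  calc tsumOfReal (fun n => matConvPow Φ (n + 1) i j) t
      = ENNReal.ofReal (matConvPow Φ 1 i j t) +
          ∑' n, ENNReal.ofReal (matConvPow Φ (n + 2) i j t) :=
        tsum_eq_zero_add' ENNReal.summable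
    _ = ENNReal.ofReal (Φ i j t) +
          ∑' n, ∑ k,
            ((ENNReal.ofReal ∘ Φ k j) ⋆ₗ (ENNReal.ofReal ∘ matConvPow Φ (n + 1) i k)) t := by
        congr 2 with n
        rw [matConvPow_add_two_apply, ENNReal.ofReal_sum_of_nonneg fun k _ =>
          conv_nonneg (matConvPow_succ_nonneg hpos n i k) (hpos k j) t]
        exact Finset.sum_congr rfl fun k _ => ht n k
    _ = ENNReal.ofReal (Φ i j t) +
          ∑ k, ∑' n,
            ((ENNReal.ofReal ∘ Φ k j) ⋆ₗ (ENNReal.ofReal ∘ matConvPow Φ (n + 1) i k)) t := by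
        rw [Summable.tsum_finsetSum fun _ _ => ENNReal.summable]
    _ = _ := by
        refine congrArg _ (Finset.sum_congr rfl fun k _ => ?_)
        exact (congrFun (lconvolution_tsum_right (hΦ k) (hP · k)) t).symm

theorem ae_matConvSeries_eq_add_sum_conv (hpos : ∀ i j t, 0 ≤ Φ i j t)
    (hint : ∀ i j, Integrable (Φ i j))
    (hsum : ∀ i j, Summable fun n => ∫ t, matConvPow Φ (n + 1) i j t) (i j : Fin D) :
    ∀ᵐ t, matConvSeries Φ i j t = Φ i j t + ∑ k, conv (matConvSeries Φ i k) (Φ k j) t := by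
  set G : Fin D → ℝ → ℝ≥0∞ := fun k => tsumOfReal (fun n => matConvPow Φ (n + 1) i k)
  have hG : ∀ k, AEMeasurable (G k) := fun k =>
    aemeasurable_tsumOfReal (integrable_matConvPow_succ hint · i k)
  have hGint : ∀ k, ∫⁻ t, G k t ≠ ∞ := fun k => by
    simp [G, lintegral_tsumOfReal (fun n => matConvPow_succ_nonneg hpos n i k)
      (integrable_matConvPow_succ hint · i k) (hsum i k)]
  have hΦ : ∀ k, AEMeasurable (ENNReal.ofReal ∘ Φ k j) := fun k =>
    (hint k j).aemeasurable.ennreal_ofReal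
  have hconv : ∀ k t, conv (matConvSeries Φ i k) (Φ k j) t
      = (((ENNReal.ofReal ∘ Φ k j) ⋆ₗ G k) t).toReal := fun k t => by
    have hGae : ENNReal.ofReal ∘ matConvSeries Φ i k =ᵐ[volume] G k := by
      filter_upwards [ae_lt_top' (hG k) (hGint k)] with s hs
      exact ENNReal.ofReal_toReal hs.ne
    rw [conv_eq_toReal_lconvolution (f := matConvSeries Φ i k) (fun _ => ENNReal.toReal_nonneg)
      (hpos k j) (hG k).ennreal_toReal (hint k j).aemeasurable, lconvolution_congr_ae .rfl hGae]
  have hfin : ∀ᵐ t, ∀ k, ((ENNReal.ofReal ∘ Φ k j) ⋆ₗ G k) t < ∞ := by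
    refine ae_all_iff.mpr fun k => ae_lt_top' (aemeasurable_lconvolution (hΦ k) (hG k)) ?_
    rw [lintegral_lconvolution (hΦ k) (hG k)]
    exact ENNReal.mul_ne_top (hint k j).lintegral_lt_top.ne (hGint k)
  filter_upwards [ae_tsumOfReal_matConvPow_eq_add_sum_lconvolution hpos hint i j, hfin]
    with t ht htfin
  rw [matConvSeries, ht, ENNReal.toReal_add ENNReal.ofReal_ne_top
    (ENNReal.sum_ne_top.mpr fun k _ => (htfin k).ne), ENNReal.toReal_ofReal (hpos i j t),
    ENNReal.toReal_sum fun k _ => (htfin k).ne]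
  simp only [hconv, G]

end MatConvPow

theorem stmt_10_general (D : ℕ) (Φ : Fin D → Fin D → ℝ → ℝ)
    (hpos : ∀ i j t, 0 ≤ Φ i j t) (hint : ∀ i j, Integrable (Φ i j))
    (hc : ∀ i j, Causal (Φ i j))
    (hspec : ∀ μ ∈ spectrum ℂ
      ((Matrix.of fun i j => ∫ t, Φ i j t).map (Complex.ofReal)), ‖μ‖ < 1) :
    ∃ Ψ : Fin D → Fin D → ℝ → ℝ,
      (∀ i j, Integrable (Ψ i j) ∧ (∀ᵐ t ∂(volume : Measure ℝ), 0 ≤ Ψ i j t) ∧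
        Causal (Ψ i j) ∧
        Tendsto (fun N => ∫ t, |(∑ n ∈ Finset.Icc 1 N, matConvPow Φ n i j t) - Ψ i j t|)
          atTop (nhds 0)) ∧
      (∀ i j, ∀ᵐ t ∂(volume : Measure ℝ),
        Ψ i j t = Φ i j t + ∑ k, conv (Ψ i k) (Φ k j) t) := by
  set K := Matrix.of fun i j => ∫ t, Φ i j t
  have hsum : ∀ i j, Summable fun n => ∫ t, matConvPow Φ (n + 1) i j t := fun i j => by
    simp_rw [integral_matConvPow_succ hint]
    exact (summable_nat_add_iff (f := fun m => (K ^ m) i j) 1).mpr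
      (Matrix.summable_pow_apply_of_forall_norm_spectrum_lt_one hspec i j)
  refine ⟨matConvSeries Φ, fun i j => ⟨?_, .of_forall fun t => ENNReal.toReal_nonneg, ?_, ?_⟩,
    ae_matConvSeries_eq_add_sum_conv hpos hint hsum⟩
  · exact integrable_toReal_tsumOfReal (fun n => matConvPow_succ_nonneg hpos n i j)
      (integrable_matConvPow_succ hint · i j) (hsum i j)
  · exact Causal.toReal_tsumOfReal (f := fun n => matConvPow Φ (n + 1) i j)
      (causal_matConvPow_succ hc · i j)
  · have hIcc : ∀ N t, ∑ n ∈ Finset.Icc 1 N, matConvPow Φ n i j t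
        = ∑ n ∈ Finset.range N, matConvPow Φ (n + 1) i j t := fun N t => by
      rw [Finset.range_eq_Ico, Finset.sum_Ico_add' (fun n => matConvPow Φ n i j t),
        ← Finset.Ico_add_one_right_eq_Icc]
    simp_rw [hIcc]
    exact tendsto_integral_abs_sum_range_sub_toReal_tsumOfReal
      (fun n => matConvPow_succ_nonneg hpos n i j) (integrable_matConvPow_succ hint · i j)
      (hsum i j)

/-- Let `Φ` be a `D×D` matrix of nonnegative, integrable, causal kernels
whose matrix of `L¹`-norms `K` has all complex eigenvalues of modulus `< 1` (stability
condition (H)). Then for each entry the series `Σ_{n ≥ 1} (Φ^{∗n})^{ij}` converges in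
`L¹(ℝ)` to a nonnegative, integrable, causal function `Ψ^{ij}`, and the matrix function
`Ψ` satisfies `Ψ = Φ + Ψ ∗ Φ` entrywise almost everywhere. -/
theorem stmt_10 (D : ℕ) (hD : 1 ≤ D) (Φ : Fin D → Fin D → ℝ → ℝ)
    (hpos : ∀ i j t, 0 ≤ Φ i j t) (hint : ∀ i j, Integrable (Φ i j))
    (hc : ∀ i j, Causal (Φ i j))
    (hspec : ∀ μ ∈ spectrum ℂ
      ((Matrix.of fun i j => ∫ t, Φ i j t).map (Complex.ofReal)), ‖μ‖ < 1) :
    ∃ Ψ : Fin D → Fin D → ℝ → ℝ,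
      (∀ i j, Integrable (Ψ i j) ∧ (∀ᵐ t ∂(volume : Measure ℝ), 0 ≤ Ψ i j t) ∧
        Causal (Ψ i j) ∧
        Tendsto (fun N => ∫ t, |(∑ n ∈ Finset.Icc 1 N, matConvPow Φ n i j t) - Ψ i j t|)
          atTop (nhds 0)) ∧
      (∀ i j, ∀ᵐ t ∂(volume : Measure ℝ),
        Ψ i j t = Φ i j t + ∑ k, conv (Ψ i k) (Φ k j) t) :=
  stmt_10_general D Φ hpos hint hc hspec
end

section
/- Let α, β, γ > 0 and let z < 0 be a real number, and set c = −z/β > 0. Then the function t ↦ e^{z t} α β (1 + β t)^{−(1+γ)} is integrable on [0, ∞) and ∫₀^∞ e^{z t} α β (1 + β t)^{−(1+γ)} dt = α e^{c} c^{γ} ∫_c^∞ e^{−u} u^{−(1+γ)} du. -/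
/-!
Substituting `u = c (1 + β t)` turns `e^{z t} = e^{c} e^{-u}` (because `z = -c β`) and
`(1 + β t)^{-(1+γ)} = c^{1+γ} u^{-(1+γ)}`, with `dt = du / (c β)`; the half-line `t > 0` becomes
`u > c`. Integrability holds because the power-law factor is bounded by `1` on `t > 0` while
`e^{z t}` decays exponentially.
-/

open MeasureTheory Set Real

variable {E : Type*} [NormedAddCommGroup E] [NormedSpace ℝ E]

theorem integral_comp_add_right_Ioi (g : ℝ → E) (a d : ℝ) :
    ∫ x in Ioi a, g (x + d) = ∫ x in Ioi (a + d), g x := by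
  have h := (measurePreserving_add_right volume d).setIntegral_preimage_emb
    (MeasurableEquiv.addRight d).measurableEmbedding g (Ioi (a + d))
  rwa [preimage_add_const_Ioi, add_sub_cancel_right] at h

theorem integral_comp_mul_add_Ioi (g : ℝ → E) {a : ℝ} (ha : 0 < a) (b : ℝ) :
    ∫ t in Ioi 0, g (a * t + b) = a⁻¹ • ∫ u in Ioi b, g u := by
  rw [integral_comp_mul_left_Ioi (fun s => g (s + b)) 0 ha, mul_zero,
    integral_comp_add_right_Ioi, zero_add]

theorem integrableOn_exp_mul_mul_one_add_rpow {z β p : ℝ} (A : ℝ) (hz : z < 0) (hβ : 0 ≤ β)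
    (hp : p ≤ 0) : IntegrableOn (fun t => exp (z * t) * (A * (1 + β * t) ^ p)) (Ioi 0) := by
  have hexp : IntegrableOn (fun t => exp (z * t)) (Ioi 0) := by
    simpa using exp_neg_integrableOn_Ioi 0 (neg_pos.mpr hz)
  refine hexp.mul_bdd (c := ‖A‖) (Measurable.aestronglyMeasurable (by fun_prop)) ?_
  filter_upwards [ae_restrict_mem measurableSet_Ioi] with t (ht : 0 < t)
  have hbase : 1 ≤ 1 + β * t := le_add_of_nonneg_right (mul_nonneg hβ ht.le)
  rw [norm_mul, norm_of_nonneg (rpow_nonneg (zero_le_one.trans hbase) p)]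
  exact mul_le_of_le_one_right (norm_nonneg A) (rpow_le_one_of_one_le_of_nonpos hbase hp)

theorem exp_mul_one_add_rpow_eq {β c t : ℝ} (p : ℝ) (hc : 0 < c) (ht : 0 ≤ 1 + β * t) :
    exp (-(c * β) * t) * (1 + β * t) ^ p
      = exp c * c ^ (-p) * (exp (-(c * β * t + c)) * (c * β * t + c) ^ p) := by
  have hu : c * β * t + c = c * (1 + β * t) := by ring
  rw [hu, mul_rpow hc.le ht, rpow_neg hc.le, show -(c * (1 + β * t)) = -(c * β) * t + -c by ring,
    exp_add, exp_neg]
  field_simp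

theorem stmt_16_general (α β γ z : ℝ) (hβ : 0 < β) (hγ : 0 < γ) (hz : z < 0)
    (c : ℝ) (hc : c = -z / β) :
    IntegrableOn (fun t => Real.exp (z * t) * (α * β * (1 + β * t) ^ (-(1 + γ))))
      (Set.Ioi 0) ∧
    ∫ t in Set.Ioi (0 : ℝ), Real.exp (z * t) * (α * β * (1 + β * t) ^ (-(1 + γ)))
      = α * Real.exp c * c ^ γ *
        ∫ u in Set.Ioi c, Real.exp (-u) * u ^ (-(1 + γ)) := by
  have hc0 : 0 < c := hc ▸ div_pos (neg_pos.mpr hz) hβ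
  have hz_eq : z = -(c * β) := by rw [hc, div_mul_cancel₀ _ hβ.ne', neg_neg]
  refine ⟨integrableOn_exp_mul_mul_one_add_rpow _ hz hβ.le (by linarith), ?_⟩
  have hsubst : ∀ t ∈ Ioi (0 : ℝ), exp (z * t) * (α * β * (1 + β * t) ^ (-(1 + γ)))
      = α * β * exp c * c ^ (1 + γ) *
        (exp (-(c * β * t + c)) * (c * β * t + c) ^ (-(1 + γ))) := fun t (ht : 0 < t) => by
    rw [hz_eq, mul_left_comm, exp_mul_one_add_rpow_eq _ hc0 (by positivity), neg_neg]
    ring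
  rw [setIntegral_congr_fun measurableSet_Ioi hsubst, integral_const_mul,
    integral_comp_mul_add_Ioi (fun u => exp (-u) * u ^ (-(1 + γ))) (by positivity), smul_eq_mul,
    rpow_add hc0, rpow_one]
  field_simp

/-- For `α, β, γ > 0`, `z < 0` and `c = -z/β > 0`, the function
`t ↦ e^{z t} α β (1 + β t)^{-(1+γ)}` is integrable on `[0, ∞)` and
`∫₀^∞ e^{z t} α β (1 + β t)^{-(1+γ)} dt = α e^{c} c^{γ} ∫_c^∞ e^{-u} u^{-(1+γ)} du`
(the Laplace transform of the power-law kernel as an incomplete Gamma integral). -/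
theorem stmt_16 (α β γ z : ℝ) (hα : 0 < α) (hβ : 0 < β) (hγ : 0 < γ) (hz : z < 0)
    (c : ℝ) (hc : c = -z / β) :
    IntegrableOn (fun t => Real.exp (z * t) * (α * β * (1 + β * t) ^ (-(1 + γ))))
      (Set.Ioi 0) ∧
    ∫ t in Set.Ioi (0 : ℝ), Real.exp (z * t) * (α * β * (1 + β * t) ^ (-(1 + γ)))
      = α * Real.exp c * c ^ γ *
        ∫ u in Set.Ioi c, Real.exp (-u) * u ^ (-(1 + γ)) :=
  stmt_16_general α β γ z hβ hγ hz c hc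
end
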